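/- arXiv:1305.3113 — 2 statements merged into one kernel-verified Lean document; each statement's English description precedes it below -/
import Mathlib

section
/- Let a, c ∈ ℂ and let t, z ∈ ℂ satisfy t ∉ (−∞,0] and t−z ∉ (−∞,0]. Define f(z,t) = t^{a−c} e^{t} (t−z)^{−a} using principal branches. Then z ∂_z² f(z,t) + (c−z) ∂_z f(z,t) − a f(z,t) = −a ∂_t [ t^{a−c+1} e^{t} (t−z)^{−a−1} ]. -/
/-!
Differentiating `(t - w) ^ (-a)` in `w` only lowers the exponent, so after the exponent shifts
`x ^ (y + 1) = x ^ y * x` (valid since `t` and `t - z` are nonzero) both sides become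
`a t ^ (a - c) e ^ t (t - z) ^ (-a - 2)` times the same polynomial `(a + 1) z + (t - z) (c - t)`.
-/

open Complex Filter Topology

namespace Complex

lemma cpow_add_one {x : ℂ} (hx : x ≠ 0) (y : ℂ) : x ^ (y + 1) = x ^ y * x := by
  rw [cpow_add _ _ hx, cpow_one]

lemma hasDerivAt_const_sub_cpow {t z : ℂ} (b : ℂ) (h : t - z ∈ slitPlane) :
    HasDerivAt (fun w => (t - w) ^ b) (-(b * (t - z) ^ (b - 1))) z := by
  simpa using ((hasDerivAt_id z).const_sub t).cpow_const (c := b) h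

lemma deriv_const_sub_cpow_eventuallyEq {t z : ℂ} (b : ℂ) (h : t - z ∈ slitPlane) :
    deriv (fun w => (t - w) ^ b) =ᶠ[𝓝 z] fun w => -(b * (t - w) ^ (b - 1)) := by
  have hopen : IsOpen {w : ℂ | t - w ∈ slitPlane} :=
    isOpen_slitPlane.preimage (by fun_prop)
  filter_upwards [hopen.mem_nhds h] with w hw using (hasDerivAt_const_sub_cpow b hw).deriv

lemma deriv_deriv_const_sub_cpow {t z : ℂ} (b : ℂ) (h : t - z ∈ slitPlane) :
    deriv (deriv fun w => (t - w) ^ b) z = b * (b - 1) * (t - z) ^ (b - 2) := by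
  rw [(deriv_const_sub_cpow_eventuallyEq b h).deriv_eq]
  have hd : HasDerivAt (fun w => -(b * (t - w) ^ (b - 1)))
      (-(b * -((b - 1) * (t - z) ^ (b - 1 - 1)))) z :=
    ((hasDerivAt_const_sub_cpow (b - 1) h).const_mul b).neg
  rw [hd.deriv, show b - 1 - 1 = b - 2 by ring]
  ring

lemma hasDerivAt_cpow_mul_exp_mul_sub_cpow {t z : ℂ} (p q : ℂ) (ht : t ∈ slitPlane)
    (htz : t - z ∈ slitPlane) :
    HasDerivAt (fun s => s ^ p * exp s * (s - z) ^ q)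
      (t ^ (p - 1) * exp t * (t - z) ^ (q - 1) * (p * (t - z) + t * (t - z) + q * t)) t := by
  have hd : HasDerivAt (fun s => s ^ p * exp s * (s - z) ^ q)
      ((p * t ^ (p - 1) * exp t + t ^ p * exp t) * (t - z) ^ q
        + t ^ p * exp t * (q * (t - z) ^ (q - 1))) t := by
    simpa using (((hasDerivAt_id' t).cpow_const ht).fun_mul (hasDerivAt_exp t)).fun_mul
      (((hasDerivAt_id' t).sub_const z).cpow_const htz)
  have htp : t ^ p = t ^ (p - 1) * t := by
    rw [← cpow_add_one (slitPlane_ne_zero ht), sub_add_cancel]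
  have htzq : (t - z) ^ q = (t - z) ^ (q - 1) * (t - z) := by
    rw [← cpow_add_one (slitPlane_ne_zero htz), sub_add_cancel]
  rw [htp, htzq] at hd
  exact hd.congr_deriv (by ring)

end Complex

/-- the confluent operator applied in `z` to
`f(z,t) = t^(a-c) e^t (t-z)^(-a)` equals
`-a ∂_t [ t^(a-c+1) e^t (t-z)^(-a-1) ]`. -/
theorem confluent_integrand_identity (a c : ℂ) (t z : ℂ)
    (ht : t ∈ Complex.slitPlane) (htz : (t - z) ∈ Complex.slitPlane) :
    z * deriv (deriv (fun w : ℂ =>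
          t ^ (a - c) * Complex.exp t * (t - w) ^ (-a))) z
      + (c - z) * deriv (fun w : ℂ =>
          t ^ (a - c) * Complex.exp t * (t - w) ^ (-a)) z
      - a * (t ^ (a - c) * Complex.exp t * (t - z) ^ (-a))
    = -a * deriv (fun s : ℂ =>
        s ^ (a - c + 1) * Complex.exp s * (s - z) ^ (-a - 1)) t := by
  have htz0 := slitPlane_ne_zero htz
  have hpow₁ : (t - z) ^ (-a - 1) = (t - z) ^ (-a - 2) * (t - z) := by
    rw [← cpow_add_one htz0]; ring_nf
  have hpow₀ : (t - z) ^ (-a) = (t - z) ^ (-a - 2) * (t - z) * (t - z) := by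
    rw [← cpow_add_one htz0, ← cpow_add_one htz0]; ring_nf
  rw [deriv_const_mul_field', deriv_const_mul_field']
  beta_reduce
  rw [deriv_deriv_const_sub_cpow _ htz,
    (hasDerivAt_const_sub_cpow _ htz).deriv,
    (hasDerivAt_cpow_mul_exp_mul_sub_cpow _ _ ht htz).deriv,
    show a - c + 1 - 1 = a - c by ring, show -a - 1 - 1 = -a - 2 by ring, hpow₁, hpow₀]
  ring
end

section
/- Pfaff's transformation: let a, b, c ∈ ℂ with c ∉ {0,−1,−2,…}, and let z ∈ ℂ with |z| < 1 and |z/(z−1)| < 1. Then F(a,b;c;z) = (1−z)^{−a} F(a,c−b;c; z/(z−1)), where (1−z)^{−a} is the principal power (well defined since Re(1−z) > 0). -/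
/-!
For small `z`, write `(1 - z) ^ (-a) * (z / (z - 1)) ^ n = (-z) ^ n * (1 - z) ^ (-a - n)` and expand
the last factor by the binomial series. The resulting double series converges absolutely for
`‖z‖ < 1/2`, and summing it along anti-diagonals produces the coefficients of `F(a, b; c; z)` by
the Chu–Vandermonde identity. Both sides are analytic on the convex region `‖z‖ < 1, re z < 1/2`,
which is exactly where `‖z / (z - 1)‖ < 1` as well, so the identity extends to all of it.
-/

open Complex Polynomial Finset Topology Metric

theorem ascPochhammer_eval_mul_eval_add {R : Type*} [CommSemiring R] (n m : ℕ) (x : R) :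
    (ascPochhammer R n).eval x * (ascPochhammer R m).eval (x + n) =
      (ascPochhammer R (n + m)).eval x := by
  simp [← ascPochhammer_mul, eval_comp]

theorem norm_ascPochhammer_eval_le {R : Type*} [NormedCommRing R] [NormOneClass R] (n : ℕ)
    {s : R} {w : ℝ} (hw : ‖s‖ ≤ w) :
    ‖(ascPochhammer R n).eval s‖ ≤ (ascPochhammer ℝ n).eval w := by
  induction n with
  | zero => simp
  | succ n ih =>
    simp only [ascPochhammer_succ_eval]
    refine (norm_mul_le _ _).trans (mul_le_mul ih ?_ (norm_nonneg _) ((norm_nonneg _).trans ih))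
    exact (norm_add_le _ _).trans (add_le_add hw ((Nat.norm_cast_le n).trans (by simp)))

theorem Ring.choose_add_natCast_sub_one {K : Type*} [Field K] [CharZero K] (s : K) (n : ℕ) :
    Ring.choose (s + n - 1) n = (ascPochhammer K n).eval s / n.factorial := by
  rw [Ring.choose_eq_smul, descPochhammer_smeval_eq_ascPochhammer, ascPochhammer_smeval_eq_eval,
    smul_eq_mul, div_eq_inv_mul, show s + n - 1 - n + 1 = s by ring]

/-- Chu–Vandermonde in the form `₂F₁(-N, c - b; c; 1) = (b)_N / (c)_N`, cleared of denominators. -/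
theorem sum_antidiagonal_choose_mul_ascPochhammer {R : Type*} [CommRing R] (b c : R) (N : ℕ) :
    ∑ p ∈ antidiagonal N, (N.choose p.1 : R) * ((-1) ^ p.1 * (ascPochhammer R p.1).eval (c - b)) *
      (ascPochhammer R p.2).eval (c + p.1) = (ascPochhammer R N).eval b := by
  have h := Ring.descPochhammer_smeval_add (r := b - c) (s := c + N - 1) N (Commute.all _ _)
  simp only [descPochhammer_smeval_eq_ascPochhammer, ascPochhammer_smeval_eq_eval] at h
  rw [show b - c + (c + N - 1) - N + 1 = b by ring] at h
  rw [h]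
  refine sum_congr rfl fun p hp => ?_
  rw [HasAntidiagonal.mem_antidiagonal] at hp
  have hsign : ((-1) ^ p.1 * (-1) ^ p.1 : R) = 1 := by rw [← mul_pow]; norm_num
  rw [show c - b = -(b - c) by ring, ascPochhammer_eval_neg_eq_descPochhammer,
    descPochhammer_eval_eq_ascPochhammer,
    show c + N - 1 - (p.2 : R) + 1 = c + p.1 by rw [← hp]; push_cast; ring]
  linear_combination (N.choose p.1 * (ascPochhammer R p.1).eval (b - c - p.1 + 1) *
    (ascPochhammer R p.2).eval (c + p.1) : R) * hsign

theorem sum_antidiagonal_ordinaryHypergeometricCoefficient {K : Type*} [Field K] [CharZero K]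
    (a b c : K) {N : ℕ} (hc : (ascPochhammer K N).eval c ≠ 0) :
    ∑ p ∈ antidiagonal N, ordinaryHypergeometricCoefficient a (c - b) c p.1 * (-1) ^ p.1 *
      ((ascPochhammer K p.2).eval (a + p.1) / p.2.factorial) =
      ordinaryHypergeometricCoefficient a b c N := by
  rw [ordinaryHypergeometricCoefficient, ← sum_antidiagonal_choose_mul_ascPochhammer b c N,
    mul_sum, sum_mul]
  refine sum_congr rfl fun p hp => ?_
  rw [HasAntidiagonal.mem_antidiagonal] at hp
  subst hp
  rw [← ascPochhammer_eval_mul_eval_add p.1 p.2 c] at hc ⊢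
  rw [← ascPochhammer_eval_mul_eval_add p.1 p.2 a,
    ← Nat.add_choose_mul_factorial_mul_factorial p.1 p.2, ← Nat.choose_symm_add]
  obtain ⟨hc₁, hc₂⟩ := mul_ne_zero_iff.1 hc
  have hchoose : ((p.1 + p.2).choose p.1 : K) ≠ 0 :=
    Nat.cast_ne_zero.2 (Nat.choose_pos (Nat.le_add_right _ _)).ne'
  simp only [ordinaryHypergeometricCoefficient]
  push_cast
  field_simp

theorem Complex.hasSum_ascPochhammer_mul_pow_div_factorial (s : ℂ) {z : ℂ} (hz : ‖z‖ < 1) :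
    HasSum (fun n => (ascPochhammer ℂ n).eval s * z ^ n / n.factorial) ((1 - z) ^ (-s)) := by
  have h := (one_div_one_sub_cpow_hasFPowerSeriesOnBall_zero s).hasSum
    (y := z) (by simpa [enorm_eq_nnnorm, ← NNReal.coe_lt_one] using hz)
  simp only [FormalMultilinearSeries.ofScalars_apply_eq, Ring.choose_add_natCast_sub_one,
    smul_eq_mul, zero_add, one_div, ← cpow_neg] at h
  simpa only [div_mul_eq_mul_div] using h

theorem Real.hasSum_ascPochhammer_mul_pow_div_factorial (w : ℝ) {t : ℝ} (ht : |t| < 1) :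
    HasSum (fun n => (ascPochhammer ℝ n).eval w * t ^ n / n.factorial) ((1 - t) ^ (-w)) := by
  have h := (Real.one_div_one_sub_rpow_hasFPowerSeriesOnBall_zero w).hasSum
    (y := t) (by simpa [enorm_eq_nnnorm, ← NNReal.coe_lt_one] using ht)
  simp only [FormalMultilinearSeries.ofScalars_apply_eq, Ring.choose_add_natCast_sub_one,
    smul_eq_mul, zero_add, one_div,
    ← Real.rpow_neg (sub_nonneg.2 (abs_lt.1 ht).2.le)] at h
  simpa only [div_mul_eq_mul_div] using h

theorem Summable.tsum_tsum_eq_tsum_sum_antidiagonal {E : Type*} [NormedAddCommGroup E]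
    [CompleteSpace E] {f : ℕ × ℕ → E} (hf : Summable f) :
    ∑' n, ∑' m, f (n, m) = ∑' N, ∑ p ∈ antidiagonal N, f p := by
  rw [← hf.tsum_prod, ← HasAntidiagonal.sigmaAntidiagonalEquivProd.tsum_eq f]
  exact (HasAntidiagonal.sigmaAntidiagonalEquivProd.summable_iff.2 hf).tsum_sigma.trans
    (tsum_congr fun N => Finset.tsum_subtype _ f)

theorem summable_mul_ascPochhammer_mul_pow_div_factorial {u : ℕ → ℂ} (a : ℂ) {z : ℂ}
    (hz : ‖z‖ < 1) (hu : Summable fun n => ‖u n‖ * (1 - ‖z‖)⁻¹ ^ n) :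
    Summable fun p : ℕ × ℕ =>
      u p.1 * ((ascPochhammer ℂ p.2).eval (a + p.1) * z ^ p.2 / p.2.factorial) := by
  set t := ‖z‖
  set w := ‖a‖ + 1
  have ht : |t| < 1 := by rwa [abs_norm]
  have h1t : 0 < 1 - t := sub_pos.2 hz
  set g : ℕ × ℕ → ℝ := fun p =>
    ‖u p.1‖ * ((ascPochhammer ℝ p.2).eval (w + p.1) * t ^ p.2 / p.2.factorial)
  have hg : 0 ≤ g := fun p => by
    have := ascPochhammer_pos p.2 (w + p.1) (by positivity)
    positivity
  have hrow (n : ℕ) : HasSum (fun m => g (n, m)) ((1 - t) ^ (-w) * (‖u n‖ * (1 - t)⁻¹ ^ n)) := by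
    have hval : ‖u n‖ * (1 - t) ^ (-(w + n)) = (1 - t) ^ (-w) * (‖u n‖ * (1 - t)⁻¹ ^ n) := by
      rw [neg_add, Real.rpow_add h1t, Real.rpow_neg h1t.le (n : ℝ), Real.rpow_natCast, inv_pow]
      ring
    rw [← hval]
    exact (Real.hasSum_ascPochhammer_mul_pow_div_factorial (w + n) ht).mul_left ‖u n‖
  have hgs : Summable g := (summable_prod_of_nonneg hg).2
    ⟨fun n => (hrow n).summable, by simpa only [(hrow _).tsum_eq] using hu.mul_left _⟩
  refine hgs.of_norm_bounded fun p => ?_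
  simp only [g, norm_mul, norm_div, norm_pow, Complex.norm_natCast]
  gcongr
  refine norm_ascPochhammer_eval_le _ ((norm_add_le _ _).trans ?_)
  simp [w]

section Hypergeometric

variable {𝕂 : Type*} [RCLike 𝕂]

theorem ordinaryHypergeometricSeries_radius_ge_one (𝔸 : Type*) [NormedDivisionRing 𝔸]
    [NormedAlgebra 𝕂 𝔸] (a b c : 𝕂) : 1 ≤ (ordinaryHypergeometricSeries 𝔸 a b c).radius := by
  by_cases ha : ∃ k : ℕ, (k : 𝕂) = -a
  · obtain ⟨k, hk⟩ := ha
    rw [← neg_neg a, ← hk, ordinaryHypergeometric_radius_top_of_neg_nat₁]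
    exact le_top
  by_cases hb : ∃ k : ℕ, (k : 𝕂) = -b
  · obtain ⟨k, hk⟩ := hb
    rw [← neg_neg b, ← hk, ordinaryHypergeometric_radius_top_of_neg_nat₂]
    exact le_top
  by_cases hc : ∃ k : ℕ, (k : 𝕂) = -c
  · obtain ⟨k, hk⟩ := hc
    rw [← neg_neg c, ← hk, ordinaryHypergeometric_radius_top_of_neg_nat₃]
    exact le_top
  push Not at ha hb hc
  rw [ordinaryHypergeometricSeries_radius_eq_one _ _ _ _ fun k => ⟨ha k, hb k, hc k⟩]

theorem analyticOnNhd_ordinaryHypergeometric (𝔸 : Type*) [NormedDivisionRing 𝔸]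
    [NormedAlgebra 𝕂 𝔸] [CompleteSpace 𝔸] (a b c : 𝕂) :
    AnalyticOnNhd 𝕂 (₂F₁ a b c : 𝔸 → 𝔸) (ball 0 1) := by
  have hr := ordinaryHypergeometricSeries_radius_ge_one 𝔸 a b c
  refine fun x hx => ((ordinaryHypergeometricSeries 𝔸 a b c).hasFPowerSeriesOnBall
    (zero_lt_one.trans_le hr)).analyticAt_of_mem (Metric.eball_subset_eball hr ?_)
  simpa [enorm_eq_nnnorm, ← NNReal.coe_lt_one] using hx

theorem summable_norm_ordinaryHypergeometricCoefficient_mul_pow (a b c : 𝕂) {r : ℝ}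
    (hr₀ : 0 ≤ r) (hr : r < 1) :
    Summable fun n => ‖ordinaryHypergeometricCoefficient a b c n‖ * r ^ n := by
  have h := (ordinaryHypergeometricSeries 𝕂 a b c).summable_norm_mul_pow (r := ⟨r, hr₀⟩)
    ((ENNReal.coe_lt_one_iff.2 hr).trans_le (ordinaryHypergeometricSeries_radius_ge_one 𝕂 a b c))
  simp only [ordinaryHypergeometricSeries, FormalMultilinearSeries.ofScalars_norm] at h
  exact h

end Hypergeometric

theorem ordinaryHypergeometric_eq_tsum_div {K : Type*} [Field K] [TopologicalSpace K]
    [IsTopologicalRing K] (a b c z : K) :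
    ₂F₁ a b c z = ∑' n : ℕ, (ascPochhammer K n).eval a * (ascPochhammer K n).eval b * z ^ n /
      ((ascPochhammer K n).eval c * n.factorial) := by
  rw [ordinaryHypergeometric, ordinaryHypergeometric_sum_eq]
  refine tsum_congr fun n => ?_
  rw [smul_eq_mul, div_eq_mul_inv, mul_inv]
  ring

theorem ordinaryHypergeometric_pfaff_of_norm_lt_half (a b c : ℂ) {z : ℂ}
    (hc : ∀ n : ℕ, (ascPochhammer ℂ n).eval c ≠ 0) (hz : ‖z‖ < 1 / 2) :
    ₂F₁ a b c z = (1 - z) ^ (-a) * ₂F₁ a (c - b) c (z / (z - 1)) := by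
  have hz₁ : ‖z‖ < 1 := by linarith
  have h1z : 1 - z ≠ 0 := sub_ne_zero.2 fun h => by simp [← h] at hz₁
  set C := ordinaryHypergeometricCoefficient a (c - b) c
  set f : ℕ × ℕ → ℂ := fun p =>
    C p.1 * (-z) ^ p.1 * ((ascPochhammer ℂ p.2).eval (a + p.1) * z ^ p.2 / p.2.factorial)
  have hrow (n : ℕ) : ∑' m, f (n, m) = (1 - z) ^ (-a) * (C n • (z / (z - 1)) ^ n) := by
    simp only [f]
    rw [tsum_mul_left, (Complex.hasSum_ascPochhammer_mul_pow_div_factorial (a + n) hz₁).tsum_eq,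
      neg_add, cpow_add _ _ h1z, cpow_neg _ (n : ℂ), cpow_natCast, smul_eq_mul,
      ← neg_div_neg_eq z, neg_sub, div_pow]
    field_simp
  have hdiag (N : ℕ) :
      ∑ p ∈ antidiagonal N, f p = ordinaryHypergeometricCoefficient a b c N • z ^ N := by
    rw [← sum_antidiagonal_ordinaryHypergeometricCoefficient a b c (hc N), smul_eq_mul, sum_mul]
    refine sum_congr rfl fun p hp => ?_
    rw [← HasAntidiagonal.mem_antidiagonal.1 hp, pow_add, neg_pow]
    ring
  have hf : Summable f := by
    refine summable_mul_ascPochhammer_mul_pow_div_factorial (u := fun n => C n * (-z) ^ n) a hz₁ ?_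
    refine (summable_norm_ordinaryHypergeometricCoefficient_mul_pow a (c - b) c
      (r := ‖z‖ / (1 - ‖z‖)) (by positivity) ?_).congr fun n => ?_
    · rw [div_lt_one (by linarith)]
      linarith
    · rw [norm_mul (C n), norm_pow, norm_neg, div_eq_mul_inv, mul_pow]
      ring
  calc ₂F₁ a b c z = ∑' N, ordinaryHypergeometricCoefficient a b c N • z ^ N :=
        ordinaryHypergeometric_sum_eq a b c z
    _ = ∑' N, ∑ p ∈ antidiagonal N, f p := tsum_congr fun N => (hdiag N).symm
    _ = ∑' n, ∑' m, f (n, m) := hf.tsum_tsum_eq_tsum_sum_antidiagonal.symm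
    _ = (1 - z) ^ (-a) * ₂F₁ a (c - b) c (z / (z - 1)) := by
      rw [tsum_congr hrow, tsum_mul_left, ordinaryHypergeometric, ordinaryHypergeometric_sum_eq]

theorem Complex.norm_div_sub_one_lt_one_iff {z : ℂ} (hz : z ≠ 1) :
    ‖z / (z - 1)‖ < 1 ↔ z.re < 1 / 2 := by
  rw [norm_div, div_lt_one (norm_pos_iff.2 (sub_ne_zero.2 hz)),
    ← sq_lt_sq₀ (norm_nonneg _) (norm_nonneg _), Complex.sq_norm, Complex.sq_norm, normSq_apply,
    normSq_apply]
  simp only [sub_re, one_re, sub_im, one_im, sub_zero]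
  constructor <;> intro h <;> nlinarith

theorem ordinaryHypergeometric_pfaff (a b c : ℂ) (hc : ∀ n : ℕ, (ascPochhammer ℂ n).eval c ≠ 0)
    {z : ℂ} (hz : ‖z‖ < 1) (hz' : z.re < 1 / 2) :
    ₂F₁ a b c z = (1 - z) ^ (-a) * ₂F₁ a (c - b) c (z / (z - 1)) := by
  set U : Set ℂ := ball 0 1 ∩ {x | x.re < 1 / 2}
  have hUconn : IsPreconnected U :=
    ((convex_ball 0 1).inter (convex_halfSpace_re_lt _)).isPreconnected
  have hL : AnalyticOnNhd ℂ (₂F₁ a b c) U :=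
    (analyticOnNhd_ordinaryHypergeometric ℂ a b c).mono Set.inter_subset_left
  have hR : AnalyticOnNhd ℂ (fun x => (1 - x) ^ (-a) * ₂F₁ a (c - b) c (x / (x - 1))) U := by
    rintro x ⟨hx₁, hx₂⟩
    have hx : x ≠ 1 := by rintro rfl; norm_num at hx₂
    refine AnalyticAt.mul ?_ ?_
    · refine (analyticAt_const.sub analyticAt_id).cpow analyticAt_const ?_
      refine mem_slitPlane_iff.2 (Or.inl ?_)
      simp only [Pi.sub_apply, id, sub_re, one_re]
      linarith [hx₂.out]
    · refine (analyticOnNhd_ordinaryHypergeometric ℂ a (c - b) c _ ?_).comp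
        (analyticAt_id.div (analyticAt_id.sub analyticAt_const) (sub_ne_zero.2 hx))
      simpa using (norm_div_sub_one_lt_one_iff hx).2 hx₂
  have h0 : ₂F₁ a b c =ᶠ[𝓝 (0 : ℂ)] fun x => (1 - x) ^ (-a) * ₂F₁ a (c - b) c (x / (x - 1)) := by
    filter_upwards [ball_mem_nhds (0 : ℂ) one_half_pos] with x hx
    exact ordinaryHypergeometric_pfaff_of_norm_lt_half a b c hc (mem_ball_zero_iff.1 hx)
  exact hL.eqOn_of_preconnected_of_eventuallyEq hR hUconn (by simp [U]) h0
    ⟨mem_ball_zero_iff.2 hz, hz'⟩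

/-- Pfaff's transformation:
`F(a,b;c;z) = (1-z)^(-a) F(a,c-b;c;z/(z-1))` for `c` not a nonpositive
integer, `|z| < 1` and `|z/(z-1)| < 1`. -/
theorem pfaff_transformation (a b c z : ℂ) (hc : ∀ n : ℕ, c ≠ -(n : ℂ))
    (hz : ‖z‖ < 1) (hz' : ‖z / (z - 1)‖ < 1) :
    (∑' n : ℕ, (ascPochhammer ℂ n).eval a * (ascPochhammer ℂ n).eval b * z ^ n /
        ((ascPochhammer ℂ n).eval c * (n.factorial : ℂ)))
      = (1 - z) ^ (-a) *
          ∑' n : ℕ, (ascPochhammer ℂ n).eval a *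
            (ascPochhammer ℂ n).eval (c - b) * (z / (z - 1)) ^ n /
            ((ascPochhammer ℂ n).eval c * (n.factorial : ℂ)) := by
  have hc' (n : ℕ) : (ascPochhammer ℂ n).eval c ≠ 0 := by
    rw [Ne, ascPochhammer_eval_eq_zero_iff]
    rintro ⟨k, -, hk⟩
    exact hc k (by rw [hk, neg_neg])
  have hz₁ : z ≠ 1 := by rintro rfl; simp at hz
  rw [← ordinaryHypergeometric_eq_tsum_div, ← ordinaryHypergeometric_eq_tsum_div]
  exact ordinaryHypergeometric_pfaff a b c hc' hz ((norm_div_sub_one_lt_one_iff hz₁).1 hz')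
end
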